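/- arXiv:1307.2330 — 4 statements merged into one kernel-verified Lean document; each statement's English description precedes it below -/
import Mathlib

section
/- Let p ≥ 2 and let (σ^r_{st}) for r,s,t ∈ {1,...,p} be a family of real numbers that is fully symmetric in its three indices (σ^r_{st} = σ^s_{rt} = σ^t_{rs}). Then (p+2)·∑_{r,s,t=1}^p (σ^r_{st})² − 3·∑_{r=1}^p (∑_{s=1}^p σ^r_{ss})² equals ∑_{r<s<t} 6(p+2)(σ^r_{st})² + ∑_{r≠s} (σ^r_{rr} − 3σ^r_{ss})² + ∑_{r∉{s,t}, s<t} 3(σ^r_{ss} − σ^r_{tt})², and in particular (p+2)·∑_{r,s,t}(σ^r_{st})² ≥ 3·∑_r (∑_s σ^r_{ss})². -/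
open Finset

section Helpers

variable {p : ℕ}

private lemma sw12 (F : Fin p → Fin p → Fin p → ℝ) :
    ∑ r, ∑ s, ∑ t, F r s t = ∑ r, ∑ s, ∑ t, F s r t := Finset.sum_comm

private lemma sw23 (F : Fin p → Fin p → Fin p → ℝ) :
    ∑ r, ∑ s, ∑ t, F r s t = ∑ r, ∑ s, ∑ t, F r t s :=
  Finset.sum_congr rfl fun _ _ => Finset.sum_comm

private lemma sw13 (F : Fin p → Fin p → Fin p → ℝ) :
    ∑ r, ∑ s, ∑ t, F r s t = ∑ r, ∑ s, ∑ t, F t s r :=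
  (sw12 F).trans ((sw23 fun a b c => F b a c).trans (sw12 fun a b c => F c a b))

private lemma cyc1 (F : Fin p → Fin p → Fin p → ℝ) :
    ∑ r, ∑ s, ∑ t, F r s t = ∑ r, ∑ s, ∑ t, F s t r :=
  (sw23 F).trans (sw12 fun a b c => F a c b)

private lemma cyc2 (F : Fin p → Fin p → Fin p → ℝ) :
    ∑ r, ∑ s, ∑ t, F r s t = ∑ r, ∑ s, ∑ t, F t r s :=
  (sw12 F).trans (sw23 fun a b c => F b a c)

private lemma swap2 (G : Fin p → Fin p → ℝ) :
    ∑ s, ∑ t, G s t = ∑ s, ∑ t, G t s := Finset.sum_comm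

private lemma sum_ne_helper (x : Fin p → ℝ) (r : Fin p) :
    ∑ s, (if r ≠ s then x s else 0) = (∑ s, x s) - x r := by
  have h : ∀ s, (if r ≠ s then x s else 0) = x s - (if r = s then x s else 0) := by
    intro s; by_cases h : r = s <;> simp [h]
  simp only [h, Finset.sum_sub_distrib, Finset.sum_ite_eq, Finset.mem_univ, if_true]

private lemma lin_sum (y : Fin p → ℝ) (α β γ : ℝ) :
    ∑ s, (α * (y s) ^ 2 + β * y s + γ)
      = α * (∑ s, (y s) ^ 2) + β * (∑ s, y s) + p * γ := by
  rw [Finset.sum_add_distrib, Finset.sum_add_distrib, ← Finset.mul_sum, ← Finset.mul_sum,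
    Finset.sum_const, Finset.card_univ, Fintype.card_fin, nsmul_eq_mul]

set_option maxHeartbeats 2000000 in
private lemma six_split (r s t : Fin p) (v : ℝ) :
    v = (if r < s ∧ s < t then v else 0) + (if r < t ∧ t < s then v else 0)
      + (if s < r ∧ r < t then v else 0) + (if s < t ∧ t < r then v else 0)
      + (if t < r ∧ r < s then v else 0) + (if t < s ∧ s < r then v else 0)
      + (if r = s ∧ s ≠ t then v else 0) + (if r = t ∧ r ≠ s then v else 0)
      + (if s = t ∧ r ≠ s then v else 0) + (if r = s ∧ s = t then v else 0) := by
  simp only [Fin.lt_def, Fin.ext_iff, ne_eq]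
  split_ifs <;> (try (exfalso; omega)) <;> ring

private lemma sum_split_A {σ : Fin p → Fin p → Fin p → ℝ}
    (hsym1 : ∀ r s t, σ r s t = σ s r t) (hsym2 : ∀ r s t, σ r s t = σ t s r) :
    ∑ r, ∑ s, ∑ t, (σ r s t) ^ 2
      = 6 * (∑ r, ∑ s, ∑ t, if r < s ∧ s < t then (σ r s t) ^ 2 else 0)
        + 3 * (∑ r, ∑ s, (σ r s s) ^ 2) - 2 * (∑ r, (σ r r r) ^ 2) := by
  have hs : ∀ r s t, σ r s t = σ r t s := fun r s t =>
    (hsym2 r s t).trans ((hsym1 t s r).trans (hsym2 s t r))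
  have hD2 : (∑ r, ∑ s, ∑ t, if r < t ∧ t < s then (σ r s t) ^ 2 else 0)
      = ∑ r, ∑ s, ∑ t, if r < s ∧ s < t then (σ r s t) ^ 2 else 0 := by
    rw [sw23 fun a b c => if a < c ∧ c < b then (σ a b c) ^ 2 else 0]
    exact Finset.sum_congr rfl fun r _ => Finset.sum_congr rfl fun s _ =>
      Finset.sum_congr rfl fun t _ => by rw [hs r t s]
  have hD3 : (∑ r, ∑ s, ∑ t, if s < r ∧ r < t then (σ r s t) ^ 2 else 0)
      = ∑ r, ∑ s, ∑ t, if r < s ∧ s < t then (σ r s t) ^ 2 else 0 := by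
    rw [sw12 fun a b c => if b < a ∧ a < c then (σ a b c) ^ 2 else 0]
    exact Finset.sum_congr rfl fun r _ => Finset.sum_congr rfl fun s _ =>
      Finset.sum_congr rfl fun t _ => by rw [hsym1 s r t]
  have hD4 : (∑ r, ∑ s, ∑ t, if s < t ∧ t < r then (σ r s t) ^ 2 else 0)
      = ∑ r, ∑ s, ∑ t, if r < s ∧ s < t then (σ r s t) ^ 2 else 0 := by
    rw [cyc2 fun a b c => if b < c ∧ c < a then (σ a b c) ^ 2 else 0]
    exact Finset.sum_congr rfl fun r _ => Finset.sum_congr rfl fun s _ =>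
      Finset.sum_congr rfl fun t _ => by rw [hsym1 t r s, ← hs r s t]
  have hD5 : (∑ r, ∑ s, ∑ t, if t < r ∧ r < s then (σ r s t) ^ 2 else 0)
      = ∑ r, ∑ s, ∑ t, if r < s ∧ s < t then (σ r s t) ^ 2 else 0 := by
    rw [cyc1 fun a b c => if c < a ∧ a < b then (σ a b c) ^ 2 else 0]
    exact Finset.sum_congr rfl fun r _ => Finset.sum_congr rfl fun s _ =>
      Finset.sum_congr rfl fun t _ => by rw [hsym2 s t r, ← hs r s t]
  have hD6 : (∑ r, ∑ s, ∑ t, if t < s ∧ s < r then (σ r s t) ^ 2 else 0)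
      = ∑ r, ∑ s, ∑ t, if r < s ∧ s < t then (σ r s t) ^ 2 else 0 := by
    rw [sw13 fun a b c => if c < b ∧ b < a then (σ a b c) ^ 2 else 0]
    exact Finset.sum_congr rfl fun r _ => Finset.sum_congr rfl fun s _ =>
      Finset.sum_congr rfl fun t _ => by rw [← hsym2 r s t]
  have hEE : (∑ r, ∑ s, if r ≠ s then (σ r s s) ^ 2 else 0)
      = (∑ r, ∑ s, (σ r s s) ^ 2) - ∑ r, (σ r r r) ^ 2 := by
    rw [Finset.sum_congr rfl fun r _ => sum_ne_helper (fun s => (σ r s s) ^ 2) r,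
      Finset.sum_sub_distrib]
  have hQ : (∑ r, ∑ s, if r ≠ s then (σ r r s) ^ 2 else 0)
      = (∑ r, ∑ s, (σ r s s) ^ 2) - ∑ r, (σ r r r) ^ 2 := by
    have step1 : (∑ r, ∑ s, if r ≠ s then (σ r r s) ^ 2 else 0)
        = ∑ r, ∑ s, if r ≠ s then (σ s r r) ^ 2 else 0 :=
      Finset.sum_congr rfl fun r _ => Finset.sum_congr rfl fun s _ => by
        rw [hsym2 r r s]
    rw [step1, Finset.sum_comm]
    rw [show (∑ s, ∑ r, if r ≠ s then (σ s r r) ^ 2 else 0)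
        = ∑ r, ∑ s, if r ≠ s then (σ r s s) ^ 2 else 0 from
      Finset.sum_congr rfl fun r _ => Finset.sum_congr rfl fun s _ => by
        rw [if_congr ne_comm rfl rfl]]
    exact hEE
  have hP1 : (∑ r, ∑ s, ∑ t, if r = s ∧ s ≠ t then (σ r s t) ^ 2 else 0)
      = (∑ r, ∑ s, (σ r s s) ^ 2) - ∑ r, (σ r r r) ^ 2 := by
    have e2 : ∀ r s : Fin p, (∑ t, if r = s ∧ s ≠ t then (σ r s t) ^ 2 else 0)
        = if r = s then (∑ t, if r ≠ t then (σ r r t) ^ 2 else 0) else 0 := by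
      intro r s; by_cases h : r = s
      · subst h; simp
      · simp [h]
    rw [Finset.sum_congr rfl fun r _ => Finset.sum_congr rfl fun s _ => e2 r s]
    simp only [Finset.sum_ite_eq, Finset.mem_univ, if_true]
    exact hQ
  have hP2 : (∑ r, ∑ s, ∑ t, if r = t ∧ r ≠ s then (σ r s t) ^ 2 else 0)
      = (∑ r, ∑ s, (σ r s s) ^ 2) - ∑ r, (σ r r r) ^ 2 := by
    have e2 : ∀ r s : Fin p, (∑ t, if r = t ∧ r ≠ s then (σ r s t) ^ 2 else 0)
        = if r ≠ s then (σ r s r) ^ 2 else 0 := by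
      intro r s
      have h : ∀ t : Fin p, (if r = t ∧ r ≠ s then (σ r s t) ^ 2 else 0)
          = if r = t then (if r ≠ s then (σ r s t) ^ 2 else 0) else 0 := fun t => by
        by_cases h : r = t <;> by_cases h' : r ≠ s <;> simp [h, h']
      rw [Finset.sum_congr rfl fun t _ => h t, Finset.sum_ite_eq]
      simp
    rw [Finset.sum_congr rfl fun r _ => Finset.sum_congr rfl fun s _ => e2 r s]
    rw [show (∑ r, ∑ s, if r ≠ s then (σ r s r) ^ 2 else 0)
        = ∑ r, ∑ s, if r ≠ s then (σ r r s) ^ 2 else 0 from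
      Finset.sum_congr rfl fun r _ => Finset.sum_congr rfl fun s _ => by
        rw [hs r s r]]
    exact hQ
  have hP3 : (∑ r, ∑ s, ∑ t, if s = t ∧ r ≠ s then (σ r s t) ^ 2 else 0)
      = (∑ r, ∑ s, (σ r s s) ^ 2) - ∑ r, (σ r r r) ^ 2 := by
    have e2 : ∀ r s : Fin p, (∑ t, if s = t ∧ r ≠ s then (σ r s t) ^ 2 else 0)
        = if r ≠ s then (σ r s s) ^ 2 else 0 := by
      intro r s
      have h : ∀ t : Fin p, (if s = t ∧ r ≠ s then (σ r s t) ^ 2 else 0)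
          = if s = t then (if r ≠ s then (σ r s t) ^ 2 else 0) else 0 := fun t => by
        by_cases h : s = t <;> by_cases h' : r ≠ s <;> simp [h, h']
      rw [Finset.sum_congr rfl fun t _ => h t, Finset.sum_ite_eq]
      simp
    rw [Finset.sum_congr rfl fun r _ => Finset.sum_congr rfl fun s _ => e2 r s]
    exact hEE
  have hP4 : (∑ r, ∑ s, ∑ t, if r = s ∧ s = t then (σ r s t) ^ 2 else 0)
      = ∑ r, (σ r r r) ^ 2 := by
    have e2 : ∀ r s : Fin p, (∑ t, if r = s ∧ s = t then (σ r s t) ^ 2 else 0)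
        = if r = s then (σ r s s) ^ 2 else 0 := by
      intro r s
      have h : ∀ t : Fin p, (if r = s ∧ s = t then (σ r s t) ^ 2 else 0)
          = if s = t then (if r = s then (σ r s t) ^ 2 else 0) else 0 := fun t => by
        by_cases h : s = t <;> by_cases h' : r = s <;> simp [h, h']
      rw [Finset.sum_congr rfl fun t _ => h t, Finset.sum_ite_eq]
      simp
    rw [Finset.sum_congr rfl fun r _ => Finset.sum_congr rfl fun s _ => e2 r s]
    simp only [Finset.sum_ite_eq, Finset.mem_univ, if_true]
  have split : ∑ r, ∑ s, ∑ t, (σ r s t) ^ 2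
      = (∑ r, ∑ s, ∑ t, if r < s ∧ s < t then (σ r s t) ^ 2 else 0)
      + (∑ r, ∑ s, ∑ t, if r < t ∧ t < s then (σ r s t) ^ 2 else 0)
      + (∑ r, ∑ s, ∑ t, if s < r ∧ r < t then (σ r s t) ^ 2 else 0)
      + (∑ r, ∑ s, ∑ t, if s < t ∧ t < r then (σ r s t) ^ 2 else 0)
      + (∑ r, ∑ s, ∑ t, if t < r ∧ r < s then (σ r s t) ^ 2 else 0)
      + (∑ r, ∑ s, ∑ t, if t < s ∧ s < r then (σ r s t) ^ 2 else 0)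
      + (∑ r, ∑ s, ∑ t, if r = s ∧ s ≠ t then (σ r s t) ^ 2 else 0)
      + (∑ r, ∑ s, ∑ t, if r = t ∧ r ≠ s then (σ r s t) ^ 2 else 0)
      + (∑ r, ∑ s, ∑ t, if s = t ∧ r ≠ s then (σ r s t) ^ 2 else 0)
      + (∑ r, ∑ s, ∑ t, if r = s ∧ s = t then (σ r s t) ^ 2 else 0) := by
    calc ∑ r, ∑ s, ∑ t, (σ r s t) ^ 2
        = ∑ r, ∑ s, ∑ t,
            ((if r < s ∧ s < t then (σ r s t) ^ 2 else 0)
            + (if r < t ∧ t < s then (σ r s t) ^ 2 else 0)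
            + (if s < r ∧ r < t then (σ r s t) ^ 2 else 0)
            + (if s < t ∧ t < r then (σ r s t) ^ 2 else 0)
            + (if t < r ∧ r < s then (σ r s t) ^ 2 else 0)
            + (if t < s ∧ s < r then (σ r s t) ^ 2 else 0)
            + (if r = s ∧ s ≠ t then (σ r s t) ^ 2 else 0)
            + (if r = t ∧ r ≠ s then (σ r s t) ^ 2 else 0)
            + (if s = t ∧ r ≠ s then (σ r s t) ^ 2 else 0)
            + (if r = s ∧ s = t then (σ r s t) ^ 2 else 0)) :=
          Finset.sum_congr rfl fun r _ => Finset.sum_congr rfl fun s _ =>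
            Finset.sum_congr rfl fun t _ => six_split r s t _
      _ = _ := by simp only [Finset.sum_add_distrib]
  rw [split, hD2, hD3, hD4, hD5, hD6, hP1, hP2, hP3, hP4]
  ring

private lemma sum_T2 (σ : Fin p → Fin p → Fin p → ℝ) :
    (∑ r, ∑ s, if r ≠ s then (σ r r r - 3 * σ r s s) ^ 2 else 0)
      = ∑ r, ((p : ℝ) * (σ r r r) ^ 2 - 6 * (σ r r r) * (∑ s, σ r s s)
          + 9 * (∑ s, (σ r s s) ^ 2) - 4 * (σ r r r) ^ 2) := by
  refine Finset.sum_congr rfl fun r _ => ?_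
  rw [sum_ne_helper (fun s => (σ r r r - 3 * σ r s s) ^ 2) r]
  have e : ∑ s, (σ r r r - 3 * σ r s s) ^ 2
      = 9 * (∑ s, (σ r s s) ^ 2) + (-6 * σ r r r) * (∑ s, σ r s s)
        + (p : ℝ) * (σ r r r) ^ 2 := by
    have h : ∀ s : Fin p, (σ r r r - 3 * σ r s s) ^ 2
        = 9 * (σ r s s) ^ 2 + (-6 * σ r r r) * (σ r s s) + (σ r r r) ^ 2 := fun s => by
      ring
    rw [Finset.sum_congr rfl fun s _ => h s, lin_sum]
  rw [e]; ring

private lemma sum_T3 (σ : Fin p → Fin p → Fin p → ℝ) :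
    (∑ r, ∑ s, ∑ t, if r ≠ s ∧ r ≠ t ∧ s < t then 3 * (σ r s s - σ r t t) ^ 2 else 0)
      = ∑ r, (3 * ((p : ℝ) - 1) * (∑ s, (σ r s s) ^ 2) - 3 * (∑ s, σ r s s) ^ 2
          - 3 * (p : ℝ) * (σ r r r) ^ 2 + 6 * (σ r r r) * (∑ s, σ r s s)) := by
  refine Finset.sum_congr rfl fun r _ => ?_
  have i1 : ∀ u : ℝ, ∑ t, 3 * (u - σ r t t) ^ 2
      = 3 * (∑ t, (σ r t t) ^ 2) + (-6 * u) * (∑ t, σ r t t) + (p : ℝ) * (3 * u ^ 2) := by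
    intro u
    have h : ∀ t : Fin p, 3 * (u - σ r t t) ^ 2
        = 3 * (σ r t t) ^ 2 + (-6 * u) * (σ r t t) + 3 * u ^ 2 := fun t => by ring
    rw [Finset.sum_congr rfl fun t _ => h t, lin_sum]
  have hW : (∑ s, ∑ t, if r ≠ s ∧ r ≠ t then 3 * (σ r s s - σ r t t) ^ 2 else 0)
      = 6 * ((p : ℝ) - 1) * (∑ s, (σ r s s) ^ 2) - 6 * (∑ s, σ r s s) ^ 2
        - 6 * (p : ℝ) * (σ r r r) ^ 2 + 12 * (σ r r r) * (∑ s, σ r s s) := by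
    have e4 : ∀ s t : Fin p, (if r ≠ s ∧ r ≠ t then 3 * (σ r s s - σ r t t) ^ 2 else 0)
        = 3 * (σ r s s - σ r t t) ^ 2
          - (if r = s then 3 * (σ r s s - σ r t t) ^ 2 else 0)
          - (if r = t then 3 * (σ r s s - σ r t t) ^ 2 else 0)
          + (if r = s then (if r = t then 3 * (σ r s s - σ r t t) ^ 2 else 0) else 0) := by
      intro s t
      by_cases h1 : r = s <;> by_cases h2 : r = t <;> simp [h1, h2] <;> ring
    rw [Finset.sum_congr rfl fun s _ => Finset.sum_congr rfl fun t _ => e4 s t]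
    simp only [Finset.sum_add_distrib, Finset.sum_sub_distrib]
    have w1 : ∑ s, ∑ t, 3 * (σ r s s - σ r t t) ^ 2
        = 6 * (p : ℝ) * (∑ s, (σ r s s) ^ 2) - 6 * (∑ s, σ r s s) ^ 2 := by
      rw [Finset.sum_congr rfl fun s _ => i1 (σ r s s)]
      have h : ∀ s : Fin p, 3 * (∑ t, (σ r t t) ^ 2) + (-6 * σ r s s) * (∑ t, σ r t t)
            + (p : ℝ) * (3 * (σ r s s) ^ 2)
          = (3 * (p : ℝ)) * (σ r s s) ^ 2 + (-6 * (∑ t, σ r t t)) * (σ r s s)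
            + 3 * (∑ t, (σ r t t) ^ 2) := fun s => by ring
      rw [Finset.sum_congr rfl fun s _ => h s, lin_sum]
      ring
    have w2 : (∑ s, ∑ t, if r = s then 3 * (σ r s s - σ r t t) ^ 2 else 0)
        = 3 * (∑ t, (σ r t t) ^ 2) + (-6 * σ r r r) * (∑ t, σ r t t)
          + (p : ℝ) * (3 * (σ r r r) ^ 2) := by
      have pull : ∀ s : Fin p, (∑ t, if r = s then 3 * (σ r s s - σ r t t) ^ 2 else 0)
          = if r = s then ∑ t, 3 * (σ r s s - σ r t t) ^ 2 else 0 := fun s => by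
        by_cases h : r = s <;> simp [h]
      rw [Finset.sum_congr rfl fun s _ => pull s, Finset.sum_ite_eq]
      simp only [Finset.mem_univ, if_true]
      rw [i1 (σ r r r)]
    have w3 : (∑ s, ∑ t, if r = t then 3 * (σ r s s - σ r t t) ^ 2 else 0)
        = 3 * (∑ s, (σ r s s) ^ 2) + (-6 * σ r r r) * (∑ s, σ r s s)
          + (p : ℝ) * (3 * (σ r r r) ^ 2) := by
      have coll : ∀ s : Fin p, (∑ t, if r = t then 3 * (σ r s s - σ r t t) ^ 2 else 0)
          = 3 * (σ r s s - σ r r r) ^ 2 := fun s => by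
        rw [Finset.sum_ite_eq]; simp
      rw [Finset.sum_congr rfl fun s _ => coll s]
      have h : ∀ s : Fin p, 3 * (σ r s s - σ r r r) ^ 2
          = 3 * (σ r s s) ^ 2 + (-6 * σ r r r) * (σ r s s) + 3 * (σ r r r) ^ 2 :=
        fun s => by ring
      rw [Finset.sum_congr rfl fun s _ => h s, lin_sum]
    have w4 : (∑ s, ∑ t,
          if r = s then (if r = t then 3 * (σ r s s - σ r t t) ^ 2 else 0) else 0)
        = 3 * (σ r r r - σ r r r) ^ 2 := by
      have pull : ∀ s : Fin p,
          (∑ t, if r = s then (if r = t then 3 * (σ r s s - σ r t t) ^ 2 else 0) else 0)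
          = if r = s then 3 * (σ r s s - σ r r r) ^ 2 else 0 := fun s => by
        by_cases h : r = s <;> simp [h, Finset.sum_ite_eq]
      rw [Finset.sum_congr rfl fun s _ => pull s, Finset.sum_ite_eq]
      simp
    rw [w1, w2, w3, w4]
    ring
  have hsymm : (∑ s, ∑ t, if r ≠ s ∧ r ≠ t ∧ t < s then 3 * (σ r s s - σ r t t) ^ 2 else 0)
      = ∑ s, ∑ t, if r ≠ s ∧ r ≠ t ∧ s < t then 3 * (σ r s s - σ r t t) ^ 2 else 0 := by
    rw [swap2 fun s t => if r ≠ s ∧ r ≠ t ∧ t < s then 3 * (σ r s s - σ r t t) ^ 2 else 0]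
    refine Finset.sum_congr rfl fun s _ => Finset.sum_congr rfl fun t _ => ?_
    by_cases h1 : r = s <;> by_cases h2 : r = t <;> by_cases h3 : s < t <;>
      simp [h1, h2, h3] <;> ring
  have hsplit : (∑ s, ∑ t, if r ≠ s ∧ r ≠ t then 3 * (σ r s s - σ r t t) ^ 2 else 0)
      = (∑ s, ∑ t, if r ≠ s ∧ r ≠ t ∧ s < t then 3 * (σ r s s - σ r t t) ^ 2 else 0)
        + ∑ s, ∑ t, if r ≠ s ∧ r ≠ t ∧ t < s then 3 * (σ r s s - σ r t t) ^ 2 else 0 := by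
    simp only [← Finset.sum_add_distrib]
    refine Finset.sum_congr rfl fun s _ => Finset.sum_congr rfl fun t _ => ?_
    rcases lt_trichotomy s t with h | h | h
    · by_cases hP : r ≠ s ∧ r ≠ t <;>
        simp [hP, h, asymm h, h.ne, and_assoc]
    · subst h
      by_cases hP : r ≠ s <;> simp [hP, lt_irrefl, sub_self]
    · by_cases hP : r ≠ s ∧ r ≠ t <;>
        simp [hP, h, asymm h, h.ne, and_assoc]
  have goal2 : 2 * (∑ s, ∑ t, if r ≠ s ∧ r ≠ t ∧ s < t
        then 3 * (σ r s s - σ r t t) ^ 2 else 0)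
      = 6 * ((p : ℝ) - 1) * (∑ s, (σ r s s) ^ 2) - 6 * (∑ s, σ r s s) ^ 2
        - 6 * (p : ℝ) * (σ r r r) ^ 2 + 12 * (σ r r r) * (∑ s, σ r s s) := by
    rw [← hW, hsplit, hsymm]; ring
  linarith [goal2]

end Helpers

/-- Let `p ≥ 2` and let `σ : Fin p → Fin p → Fin p → ℝ` be fully
symmetric in its three indices.  Then
`(p+2) ∑_{r,s,t} (σ r s t)² − 3 ∑_r (∑_s σ r s s)²`
equals the sum of squares
`∑_{r<s<t} 6(p+2)(σ r s t)² + ∑_{r≠s} (σ r r r − 3 σ r s s)²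
  + ∑_{r∉{s,t}, s<t} 3 (σ r s s − σ r t t)²`,
and in particular `(p+2) ∑_{r,s,t} (σ r s t)² ≥ 3 ∑_r (∑_s σ r s s)²`.
(This is identity (4.10) / inequality (4.11) in the paper.) -/
theorem stmt_0 (p : ℕ) (hp : 2 ≤ p) (σ : Fin p → Fin p → Fin p → ℝ)
    (hsym1 : ∀ r s t, σ r s t = σ s r t) (hsym2 : ∀ r s t, σ r s t = σ t s r) :
    ((p : ℝ) + 2) * ∑ r, ∑ s, ∑ t, (σ r s t) ^ 2
        - 3 * ∑ r, (∑ s, σ r s s) ^ 2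
      = (∑ r, ∑ s, ∑ t,
            if r < s ∧ s < t then 6 * ((p : ℝ) + 2) * (σ r s t) ^ 2 else 0)
        + (∑ r, ∑ s, if r ≠ s then (σ r r r - 3 * σ r s s) ^ 2 else 0)
        + (∑ r, ∑ s, ∑ t,
            if r ≠ s ∧ r ≠ t ∧ s < t then 3 * (σ r s s - σ r t t) ^ 2 else 0) ∧
    3 * ∑ r, (∑ s, σ r s s) ^ 2 ≤ ((p : ℝ) + 2) * ∑ r, ∑ s, ∑ t, (σ r s t) ^ 2 := by
  have hDfac : (∑ r, ∑ s, ∑ t,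
        if r < s ∧ s < t then 6 * ((p : ℝ) + 2) * (σ r s t) ^ 2 else 0)
      = 6 * ((p : ℝ) + 2)
          * ∑ r, ∑ s, ∑ t, (if r < s ∧ s < t then (σ r s t) ^ 2 else 0) := by
    simp only [Finset.mul_sum]
    refine Finset.sum_congr rfl fun r _ => Finset.sum_congr rfl fun s _ =>
      Finset.sum_congr rfl fun t _ => ?_
    split_ifs <;> simp
  have hA := sum_split_A hsym1 hsym2
  have hT2 := sum_T2 σ
  have hT3 := sum_T3 σ
  have hcomb : (∑ r, ∑ s, if r ≠ s then (σ r r r - 3 * σ r s s) ^ 2 else 0)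
        + (∑ r, ∑ s, ∑ t,
            if r ≠ s ∧ r ≠ t ∧ s < t then 3 * (σ r s s - σ r t t) ^ 2 else 0)
      = 3 * ((p : ℝ) + 2) * (∑ r, ∑ s, (σ r s s) ^ 2)
        - 2 * ((p : ℝ) + 2) * (∑ r, (σ r r r) ^ 2)
        - 3 * ∑ r, (∑ s, σ r s s) ^ 2 := by
    rw [hT2, hT3, ← Finset.sum_add_distrib]
    rw [Finset.mul_sum, Finset.mul_sum, Finset.mul_sum, ← Finset.sum_sub_distrib,
      ← Finset.sum_sub_distrib]
    exact Finset.sum_congr rfl fun r _ => by ring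
  have main : ((p : ℝ) + 2) * ∑ r, ∑ s, ∑ t, (σ r s t) ^ 2
        - 3 * ∑ r, (∑ s, σ r s s) ^ 2
      = (∑ r, ∑ s, ∑ t,
            if r < s ∧ s < t then 6 * ((p : ℝ) + 2) * (σ r s t) ^ 2 else 0)
        + (∑ r, ∑ s, if r ≠ s then (σ r r r - 3 * σ r s s) ^ 2 else 0)
        + (∑ r, ∑ s, ∑ t,
            if r ≠ s ∧ r ≠ t ∧ s < t then 3 * (σ r s s - σ r t t) ^ 2 else 0) := by
    rw [hDfac]
    linear_combination ((p : ℝ) + 2) * hA - hcomb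
  refine ⟨main, ?_⟩
  have hnn1 : (0 : ℝ) ≤ ∑ r, ∑ s, ∑ t,
      if r < s ∧ s < t then 6 * ((p : ℝ) + 2) * (σ r s t) ^ 2 else 0 := by
    refine Finset.sum_nonneg fun r _ => Finset.sum_nonneg fun s _ =>
      Finset.sum_nonneg fun t _ => ?_
    split_ifs <;> positivity
  have hnn2 : (0 : ℝ) ≤ ∑ r, ∑ s, if r ≠ s then (σ r r r - 3 * σ r s s) ^ 2 else 0 := by
    refine Finset.sum_nonneg fun r _ => Finset.sum_nonneg fun s _ => ?_
    split_ifs <;> positivity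
  have hnn3 : (0 : ℝ) ≤ ∑ r, ∑ s, ∑ t,
      if r ≠ s ∧ r ≠ t ∧ s < t then 3 * (σ r s s - σ r t t) ^ 2 else 0 := by
    refine Finset.sum_nonneg fun r _ => Finset.sum_nonneg fun s _ =>
      Finset.sum_nonneg fun t _ => ?_
    split_ifs <;> positivity
  linarith [main, hnn1, hnn2, hnn3]
end

section
/- Let p ≥ 2 and let σ: Fin p → Fin p → Fin p → ℝ be fully symmetric in its three indices. Then equality (p+2)·∑_{r,s,t}(σ r s t)² = 3·∑_r (∑_s σ r s s)² holds if and only if: σ r r r = 3·σ r s s for all r ≠ s, and σ r s t = 0 for all pairwise distinct r, s, t. -/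
open Finset

/-- Let `p ≥ 2` and let `σ : Fin p → Fin p → Fin p → ℝ` be fully
symmetric in its three indices.  Then equality
`(p+2) ∑_{r,s,t} (σ r s t)² = 3 ∑_r (∑_s σ r s s)²`
holds if and only if `σ r r r = 3 σ r s s` for all `r ≠ s` and `σ r s t = 0` for
all pairwise distinct `r, s, t`.  (Equality case of inequality (4.11) in the paper.) -/
theorem stmt_1 (p : ℕ) (hp : 2 ≤ p) (σ : Fin p → Fin p → Fin p → ℝ)
    (hsym1 : ∀ r s t, σ r s t = σ s r t) (hsym2 : ∀ r s t, σ r s t = σ t s r) :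
    ((p : ℝ) + 2) * ∑ r, ∑ s, ∑ t, (σ r s t) ^ 2
        = 3 * ∑ r, (∑ s, σ r s s) ^ 2
      ↔ (∀ r s, r ≠ s → σ r r r = 3 * σ r s s) ∧
        (∀ r s t, r ≠ s → r ≠ t → s ≠ t → σ r s t = 0) := by
  have hsym3 : ∀ r s t, σ r s t = σ r t s := fun r s t => by
    rw [hsym1, hsym2, hsym1]
  -- swap lemma for sums over pairs of distinct indices
  have swap : ∀ f : Fin p → Fin p → ℝ,
      ∑ r, ∑ s ∈ univ.erase r, f r s = ∑ r, ∑ s ∈ univ.erase r, f s r := by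
    intro f
    have h1 : ∀ g : Fin p → Fin p → ℝ, ∀ r : Fin p,
        ∑ s ∈ univ.erase r, g r s = ∑ s, if s ≠ r then g r s else 0 := by
      intro g r
      rw [← Finset.filter_ne' univ r, Finset.sum_filter]
    calc ∑ r, ∑ s ∈ univ.erase r, f r s
        = ∑ r, ∑ s, if s ≠ r then f r s else 0 :=
          Finset.sum_congr rfl fun r _ => h1 f r
      _ = ∑ s, ∑ r, if s ≠ r then f r s else 0 := Finset.sum_comm
      _ = ∑ s, ∑ r ∈ univ.erase s, f r s := by
          refine Finset.sum_congr rfl fun s _ => ?_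
          rw [h1 (fun a b => f b a) s]
          exact Finset.sum_congr rfl fun r _ => by
            by_cases h : r = s <;> simp [h, Ne.symm, ne_comm]
  -- splitting the full sum according to coincidences of indices
  have split : ∑ r, ∑ s, ∑ t, (σ r s t) ^ 2
      = (∑ r, (σ r r r) ^ 2) + 3 * (∑ r, ∑ s ∈ univ.erase r, (σ r s s) ^ 2)
        + ∑ r, ∑ s ∈ univ.erase r, ∑ t ∈ (univ.erase r).erase s, (σ r s t) ^ 2 := by
    have hrow : ∀ r : Fin p, ∑ s, ∑ t, (σ r s t) ^ 2
        = ((σ r r r) ^ 2 + ∑ t ∈ univ.erase r, (σ t r r) ^ 2)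
          + ∑ s ∈ univ.erase r, ((σ s r r) ^ 2 + (σ r s s) ^ 2
              + ∑ t ∈ (univ.erase r).erase s, (σ r s t) ^ 2) := by
      intro r
      rw [← Finset.add_sum_erase univ (fun s => ∑ t, (σ r s t) ^ 2) (mem_univ r)]
      congr 1
      · rw [← Finset.add_sum_erase univ (fun t => (σ r r t) ^ 2) (mem_univ r)]
        congr 1
        exact Finset.sum_congr rfl fun t _ => by rw [hsym2 r r t]
      · refine Finset.sum_congr rfl fun s hs => ?_
        rw [← Finset.add_sum_erase univ (fun t => (σ r s t) ^ 2) (mem_univ r)]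
        rw [← Finset.add_sum_erase (univ.erase r) (fun t => (σ r s t) ^ 2) hs]
        rw [← add_assoc]
        congr 2
        rw [hsym3 r s r, hsym2 r r s]
    calc ∑ r, ∑ s, ∑ t, (σ r s t) ^ 2
        = ∑ r, (((σ r r r) ^ 2 + ∑ t ∈ univ.erase r, (σ t r r) ^ 2)
          + ∑ s ∈ univ.erase r, ((σ s r r) ^ 2 + (σ r s s) ^ 2
              + ∑ t ∈ (univ.erase r).erase s, (σ r s t) ^ 2)) :=
          Finset.sum_congr rfl fun r _ => hrow r
      _ = (∑ r, (σ r r r) ^ 2) + (∑ r, ∑ t ∈ univ.erase r, (σ t r r) ^ 2)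
          + ((∑ r, ∑ s ∈ univ.erase r, (σ s r r) ^ 2)
            + (∑ r, ∑ s ∈ univ.erase r, (σ r s s) ^ 2)
            + ∑ r, ∑ s ∈ univ.erase r, ∑ t ∈ (univ.erase r).erase s, (σ r s t) ^ 2) := by
          simp [Finset.sum_add_distrib]
      _ = _ := by
          rw [swap (fun r t => (σ t r r) ^ 2)]
          ring
  have hp1 : (1 : ℕ) ≤ p := le_trans one_le_two hp
  have hcard : ∀ r : Fin p, (((univ.erase r).card : ℕ) : ℝ) = (p : ℝ) - 1 := by
    intro r
    rw [Finset.card_erase_of_mem (mem_univ r), card_univ, Fintype.card_fin,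
      Nat.cast_sub hp1, Nat.cast_one]
  -- the per-index algebraic (Cauchy–Schwarz / Lagrange) identity
  have per : ∀ r : Fin p,
      ((p : ℝ) + 2) * ((σ r r r) ^ 2 + 3 * ∑ s ∈ univ.erase r, (σ r s s) ^ 2)
      = 3 * (∑ s, σ r s s) ^ 2
        + ∑ s ∈ univ.erase r, (σ r r r - 3 * σ r s s) ^ 2
        + (3 / 2) * ∑ s ∈ univ.erase r, ∑ t ∈ univ.erase r, (σ r s s - σ r t t) ^ 2 := by
    intro r
    set a := σ r r r with ha
    set S := ∑ s ∈ univ.erase r, σ r s s with hS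
    set Q := ∑ s ∈ univ.erase r, (σ r s s) ^ 2 with hQ
    have htau : ∑ s, σ r s s = a + S :=
      (Finset.add_sum_erase univ (fun s => σ r s s) (mem_univ r)).symm
    have e1 : ∑ s ∈ univ.erase r, (a - 3 * σ r s s) ^ 2
        = ((p : ℝ) - 1) * a ^ 2 - 6 * a * S + 9 * Q := by
      have h : ∀ s ∈ univ.erase r, (a - 3 * σ r s s) ^ 2
          = a ^ 2 - 6 * a * σ r s s + 9 * (σ r s s) ^ 2 := fun s _ => by ring
      rw [Finset.sum_congr rfl h]
      rw [Finset.sum_add_distrib, Finset.sum_sub_distrib, Finset.sum_const,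
        ← Finset.mul_sum, ← Finset.mul_sum, nsmul_eq_mul, hcard r]
    have hb : ∑ s ∈ univ.erase r, 2 * σ r s s * S = 2 * S ^ 2 := by
      rw [← Finset.sum_mul, ← Finset.mul_sum, ← hS]; ring
    have e2 : ∑ s ∈ univ.erase r, ∑ t ∈ univ.erase r, (σ r s s - σ r t t) ^ 2
        = 2 * ((p : ℝ) - 1) * Q - 2 * S ^ 2 := by
      have inner : ∀ s ∈ univ.erase r, ∑ t ∈ univ.erase r, (σ r s s - σ r t t) ^ 2
          = ((p : ℝ) - 1) * (σ r s s) ^ 2 - 2 * σ r s s * S + Q := by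
        intro s _
        have h : ∀ t ∈ univ.erase r, (σ r s s - σ r t t) ^ 2
            = (σ r s s) ^ 2 - 2 * σ r s s * σ r t t + (σ r t t) ^ 2 := fun t _ => by ring
        rw [Finset.sum_congr rfl h, Finset.sum_add_distrib, Finset.sum_sub_distrib,
          Finset.sum_const, ← Finset.mul_sum, nsmul_eq_mul, hcard r]
      rw [Finset.sum_congr rfl inner, Finset.sum_add_distrib, Finset.sum_sub_distrib,
        hb, Finset.sum_const, ← Finset.mul_sum, nsmul_eq_mul, hcard r]
      ring
    rw [htau, e1, e2]
    ring
  -- the global sum-of-squares identity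
  have key : ((p : ℝ) + 2) * ∑ r, ∑ s, ∑ t, (σ r s t) ^ 2
      = 3 * (∑ r, (∑ s, σ r s s) ^ 2)
        + (∑ r, ∑ s ∈ univ.erase r, (σ r r r - 3 * σ r s s) ^ 2)
        + (3 / 2) * (∑ r, ∑ s ∈ univ.erase r, ∑ t ∈ univ.erase r, (σ r s s - σ r t t) ^ 2)
        + ((p : ℝ) + 2)
            * ∑ r, ∑ s ∈ univ.erase r, ∑ t ∈ (univ.erase r).erase s, (σ r s t) ^ 2 := by
    have key0 : ∑ r, ((p : ℝ) + 2) * ((σ r r r) ^ 2 + 3 * ∑ s ∈ univ.erase r, (σ r s s) ^ 2)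
        = ∑ r, (3 * (∑ s, σ r s s) ^ 2
          + ∑ s ∈ univ.erase r, (σ r r r - 3 * σ r s s) ^ 2
          + (3 / 2) * ∑ s ∈ univ.erase r, ∑ t ∈ univ.erase r, (σ r s s - σ r t t) ^ 2) :=
      Finset.sum_congr rfl fun r _ => per r
    simp only [mul_add, Finset.sum_add_distrib, ← Finset.mul_sum] at key0
    rw [split]
    linear_combination key0
  set X := ∑ r, ∑ s ∈ univ.erase r, (σ r r r - 3 * σ r s s) ^ 2 with hXdef
  set Y := ∑ r, ∑ s ∈ univ.erase r, ∑ t ∈ univ.erase r, (σ r s s - σ r t t) ^ 2 with hYdef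
  set Z := ∑ r, ∑ s ∈ univ.erase r, ∑ t ∈ (univ.erase r).erase s, (σ r s t) ^ 2 with hZdef
  have hXnn : 0 ≤ X :=
    Finset.sum_nonneg fun r _ => Finset.sum_nonneg fun s _ => sq_nonneg _
  have hYnn : 0 ≤ Y :=
    Finset.sum_nonneg fun r _ => Finset.sum_nonneg fun s _ =>
      Finset.sum_nonneg fun t _ => sq_nonneg _
  have hZnn : 0 ≤ Z :=
    Finset.sum_nonneg fun r _ => Finset.sum_nonneg fun s _ =>
      Finset.sum_nonneg fun t _ => sq_nonneg _
  have hpc : (0 : ℝ) < (p : ℝ) + 2 := by positivity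
  constructor
  · intro h
    have hX0 : X = 0 := by nlinarith
    have hZ0 : Z = 0 := by nlinarith
    have hXr := (Finset.sum_eq_zero_iff_of_nonneg
      (fun r _ => Finset.sum_nonneg fun s _ => sq_nonneg ((σ r r r - 3 * σ r s s)))).mp hX0
    have hZr := (Finset.sum_eq_zero_iff_of_nonneg
      (fun r _ => Finset.sum_nonneg fun s _ =>
        Finset.sum_nonneg fun t _ => sq_nonneg _)).mp hZ0
    constructor
    · intro r s hrs
      have hs : s ∈ univ.erase r := Finset.mem_erase.mpr ⟨Ne.symm hrs, mem_univ s⟩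
      have h1 := (Finset.sum_eq_zero_iff_of_nonneg
        (fun s _ => sq_nonneg ((σ r r r - 3 * σ r s s)))).mp (hXr r (mem_univ r)) s hs
      have := sq_eq_zero_iff.mp h1
      linarith [this]
    · intro r s t hrs hrt hst
      have hs : s ∈ univ.erase r := Finset.mem_erase.mpr ⟨Ne.symm hrs, mem_univ s⟩
      have ht : t ∈ (univ.erase r).erase s :=
        Finset.mem_erase.mpr ⟨Ne.symm hst, Finset.mem_erase.mpr ⟨Ne.symm hrt, mem_univ t⟩⟩
      have h1 := (Finset.sum_eq_zero_iff_of_nonneg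
        (fun s _ => Finset.sum_nonneg fun t _ => sq_nonneg _)).mp (hZr r (mem_univ r)) s hs
      have h2 := (Finset.sum_eq_zero_iff_of_nonneg
        (fun t _ => sq_nonneg ((σ r s t)))).mp h1 t ht
      exact sq_eq_zero_iff.mp h2
  · rintro ⟨h1, h2⟩
    have hX0 : X = 0 := Finset.sum_eq_zero fun r _ => Finset.sum_eq_zero fun s hs => by
      have hsr : s ≠ r := (Finset.mem_erase.mp hs).1
      rw [h1 r s (Ne.symm hsr)]; ring
    have hY0 : Y = 0 := Finset.sum_eq_zero fun r _ => Finset.sum_eq_zero fun s hs =>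
      Finset.sum_eq_zero fun t ht => by
        have hsr : s ≠ r := (Finset.mem_erase.mp hs).1
        have htr : t ≠ r := (Finset.mem_erase.mp ht).1
        have e1 := h1 r s (Ne.symm hsr)
        have e2 := h1 r t (Ne.symm htr)
        have : σ r s s = σ r t t := by linarith
        rw [this]; ring
    have hZ0 : Z = 0 := Finset.sum_eq_zero fun r _ => Finset.sum_eq_zero fun s hs =>
      Finset.sum_eq_zero fun t ht => by
        have hsr : s ≠ r := (Finset.mem_erase.mp hs).1
        obtain ⟨hts, ht'⟩ := Finset.mem_erase.mp ht
        have htr : t ≠ r := (Finset.mem_erase.mp ht').1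
        rw [h2 r s t (Ne.symm hsr) (Ne.symm htr) (Ne.symm hts)]; ring
    rw [key, hX0, hY0, hZ0]
    ring
end

section
/- Let N be a CR-submanifold of a Kähler manifold M̃. For any vector field U tangent to N, X in the holomorphic distribution D, and Z in the totally real distribution D⊥, one has ⟨σ(U, JX), JZ⟩ = ⟨∇_U X, Z⟩, where σ is the second fundamental form and ∇ the Levi-Civita connection of N. -/
open scoped RealInnerProductSpace

/-- Vector-field model of a CR-submanifold `N` of a Kähler manifold `M̃`:
`V` is the space of ambient vector fields along `N`; `g` is the (pointwise) Riemannian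
metric, `J` the complex structure (`J² = −1`, `g`-isometric); `T` is the tangent
distribution of `N`, decomposed as the orthogonal direct sum of the holomorphic
distribution `D` (with `JD = D`) and the totally real distribution `Dp = D⊥`
(with `J D⊥ ⊆ T⊥N`); `nablaA` is the ambient Levi-Civita connection (torsion-free,
Kähler: `∇̃J = 0`), `nabla` the induced Levi-Civita connection on `N`, `σ` the second
fundamental form (Gauss formula `∇̃_X Y = ∇_X Y + σ(X,Y)`), `A` the shape operator
(`⟨A_ξ X, Y⟩ = ⟨σ(X,Y), ξ⟩`), and `bracket` the Lie bracket of vector fields. -/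
structure CRSubmanifold (V : Type*) [AddCommGroup V] [Module ℝ V] where
  g : V →ₗ[ℝ] V →ₗ[ℝ] ℝ
  gsymm : ∀ X Y, g X Y = g Y X
  J : V →ₗ[ℝ] V
  Jsq : ∀ X, J (J X) = -X
  Jiso : ∀ X Y, g (J X) (J Y) = g X Y
  T : Submodule ℝ V
  D : Submodule ℝ V
  Dp : Submodule ℝ V
  hDT : D ≤ T
  hDpT : Dp ≤ T
  hsum : D ⊔ Dp = T
  horth : ∀ X ∈ D, ∀ Z ∈ Dp, g X Z = 0
  hJD : ∀ X ∈ D, J X ∈ D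
  hJDp : ∀ Z ∈ Dp, ∀ U ∈ T, g (J Z) U = 0
  nablaA : V → V → V
  nabla : V → V → V
  σ : V →ₗ[ℝ] V →ₗ[ℝ] V
  A : V → V → V
  bracket : V → V → V
  torsionfree : ∀ X Y, bracket X Y = nablaA X Y - nablaA Y X
  kaehler : ∀ X Y, nablaA X (J Y) = J (nablaA X Y)
  gauss : ∀ X ∈ T, ∀ Y ∈ T, nablaA X Y = nabla X Y + σ X Y
  nablaT : ∀ X ∈ T, ∀ Y ∈ T, nabla X Y ∈ T
  σnormal : ∀ X ∈ T, ∀ Y ∈ T, ∀ U ∈ T, g (σ X Y) U = 0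
  σsymm : ∀ X Y, σ X Y = σ Y X
  shapeT : ∀ ξ X, A ξ X ∈ T
  shape : ∀ ξ X, X ∈ T → ∀ Y ∈ T, g (A ξ X) Y = g (σ X Y) ξ

/-- Lemma 3.1(2).  For a CR-submanifold `N` of a Kähler manifold,
`⟨σ(U, JX), JZ⟩ = ⟨∇_U X, Z⟩` for every tangent `U`, `X ∈ D` and `Z ∈ D⊥`. -/
theorem stmt_6 {V : Type*} [AddCommGroup V] [Module ℝ V] (S : CRSubmanifold V)
    (U X Z : V) (hU : U ∈ S.T) (hX : X ∈ S.D) (hZ : Z ∈ S.Dp) :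
    S.g (S.σ U (S.J X)) (S.J Z) = S.g (S.nabla U X) Z := by
  have hXT : X ∈ S.T := S.hDT hX
  have hJXT : S.J X ∈ S.T := S.hDT (S.hJD X hX)
  have hZT : Z ∈ S.T := S.hDpT hZ
  have h1 : S.σ U (S.J X) = S.nablaA U (S.J X) - S.nabla U (S.J X) := by
    rw [S.gauss U hU (S.J X) hJXT]; abel
  have h2 : S.g (S.nabla U (S.J X)) (S.J Z) = 0 := by
    rw [S.gsymm]; exact S.hJDp Z hZ _ (S.nablaT U hU _ hJXT)
  have h3 : S.g (S.nablaA U (S.J X)) (S.J Z) = S.g (S.nabla U X) Z := by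
    rw [S.kaehler, S.Jiso, S.gauss U hU X hXT, map_add, LinearMap.add_apply,
      S.σnormal U hU X hXT Z hZT, add_zero]
  rw [h1, map_sub, LinearMap.sub_apply, h2, h3, sub_zero]
end

section
/- Let N be an anti-holomorphic submanifold of a complex space form M̃^{1+p}(4c) with rank_ℂ D = 1 and p ≥ 2. If N is D-minimal (i.e., σ(Je_1, Je_1) = −σ(e_1, e_1) for a unit e_1 ∈ D), then the second fundamental form satisfies σ(X, JY) = σ(JX, Y) for all X, Y ∈ D, and hence the holomorphic distribution D is automatically integrable. -/
open scoped RealInnerProductSpace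

/-- key step in the proof of Theorem 5.2.  Let `N` be an
anti-holomorphic submanifold of a complex space form `M̃^{1+p}(4c)` with
`rank_ℂ D = 1` (so `D` is spanned by a unit vector `e₁` together with `Je₁`) and
`J D⊥ = T⊥N`.  If `N` is `D`-minimal, i.e. `σ(Je₁, Je₁) = −σ(e₁, e₁)`, then
`σ(X, JY) = σ(JX, Y)` for all `X, Y ∈ D`, and hence (by the integrability criterion
of Lemma 3.2(1)) the holomorphic distribution `D` is integrable. -/
theorem stmt_16 {V : Type*} [AddCommGroup V] [Module ℝ V] (S : CRSubmanifold V)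
    (p : ℕ) (hp : 2 ≤ p) (Z : Fin p → V) (hZ : ∀ r, Z r ∈ S.Dp)
    (hZspan : Submodule.span ℝ (Set.range Z) = S.Dp)
    (hZON : ∀ r s, S.g (Z r) (Z s) = if r = s then 1 else 0)
    (e₁ : V) (he₁ : e₁ ∈ S.D) (he₁unit : S.g e₁ e₁ = 1)
    (hDrank : S.D = Submodule.span ℝ {e₁, S.J e₁})
    -- anti-holomorphic: every vector normal to `N` lies in `J(D⊥)`
    (hanti : ∀ ξ : V, (∀ U ∈ S.T, S.g ξ U = 0) → ξ ∈ S.Dp.map S.J)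
    -- `D`-minimality
    (hmin : S.σ (S.J e₁) (S.J e₁) = -(S.σ e₁ e₁)) :
    (∀ X ∈ S.D, ∀ Y ∈ S.D, S.σ X (S.J Y) = S.σ (S.J X) Y) ∧
    (∀ X ∈ S.D, ∀ Y ∈ S.D, S.bracket X Y ∈ S.D) := by
  classical
  -- Part 1: σ(X, JY) = σ(JX, Y) on D, by bilinearity from the basis {e₁, Je₁}.
  have hσff : S.σ (S.J e₁) (S.J e₁) = -(S.σ e₁ e₁) := hmin
  have hσfe : S.σ (S.J e₁) e₁ = S.σ e₁ (S.J e₁) := S.σsymm _ _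
  have key : ∀ X ∈ S.D, ∀ Y ∈ S.D, S.σ X (S.J Y) = S.σ (S.J X) Y := by
    intro X hX Y hY
    rw [hDrank] at hX hY
    obtain ⟨a, b, rfl⟩ := Submodule.mem_span_pair.mp hX
    obtain ⟨c, d, rfl⟩ := Submodule.mem_span_pair.mp hY
    simp only [map_add, map_smul, map_neg, LinearMap.add_apply, LinearMap.smul_apply,
      LinearMap.neg_apply, S.Jsq, hσff, hσfe]
    module
  refine ⟨key, ?_⟩
  intro X hX Y hY
  have hXT := S.hDT hX
  have hYT := S.hDT hY
  have hJXT := S.hDT (S.hJD X hX)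
  have hJYT := S.hDT (S.hJD Y hY)
  have hbr : S.bracket X Y = S.nabla X Y - S.nabla Y X := by
    rw [S.torsionfree, S.gauss X hXT Y hYT, S.gauss Y hYT X hXT, S.σsymm Y X]
    abel
  have hbrT : S.bracket X Y ∈ S.T := by
    rw [hbr]; exact sub_mem (S.nablaT X hXT Y hYT) (S.nablaT Y hYT X hXT)
  -- orthogonality of the bracket to each Z r
  have horthZ : ∀ r, S.g (S.bracket X Y) (Z r) = 0 := by
    intro r
    have hJZ : ∀ U ∈ S.T, S.g U (S.J (Z r)) = 0 := fun U hU => by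
      rw [S.gsymm]; exact S.hJDp (Z r) (hZ r) U hU
    have hiso : S.g (S.bracket X Y) (Z r)
        = S.g (S.J (S.bracket X Y)) (S.J (Z r)) := (S.Jiso _ _).symm
    have hJbr : S.J (S.bracket X Y)
        = (S.nabla X (S.J Y) - S.nabla Y (S.J X)) + (S.σ X (S.J Y) - S.σ Y (S.J X)) := by
      rw [S.torsionfree, map_sub, ← S.kaehler, ← S.kaehler,
          S.gauss X hXT _ hJYT, S.gauss Y hYT _ hJXT]
      abel
    have hσ0 : S.σ X (S.J Y) - S.σ Y (S.J X) = 0 := by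
      rw [S.σsymm Y (S.J X), ← key X hX Y hY, sub_self]
    rw [hiso, hJbr, hσ0, add_zero]
    exact hJZ _ (sub_mem (S.nablaT X hXT _ hJYT) (S.nablaT Y hYT _ hJXT))
  -- decompose the bracket as d + z with d ∈ D, z ∈ D⊥, and show z = 0
  have hbrT' : S.bracket X Y ∈ S.D ⊔ S.Dp := S.hsum ▸ hbrT
  obtain ⟨d, hd, z, hz, hdz⟩ := Submodule.mem_sup.mp hbrT'
  have hz' : z ∈ Submodule.span ℝ (Set.range Z) := hZspan ▸ hz
  obtain ⟨c, hc⟩ := (Submodule.mem_span_range_iff_exists_fun ℝ).mp hz'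
  have hcr : ∀ r, c r = 0 := by
    intro r
    have h1 : S.g z (Z r) = c r := by
      rw [← hc]
      simp [map_sum, hZON]
    have h2 : S.g d (Z r) = 0 := S.horth d hd (Z r) (hZ r)
    have h3 := horthZ r
    rw [← hdz] at h3
    simpa [map_add, h1, h2] using h3
  have hz0 : z = 0 := by
    rw [← hc]
    simp [hcr]
  rw [← hdz, hz0, add_zero]
  exact hd
end
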